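/- There exists a constant C > 0 such that for all integers k ≥ l ≥ 1, ‖(P^T Π_{2k,2l−1} P)_{2:2m,2:2m}‖_op ≤ C·λ_{k,l}(ρ) and ‖(P^T Π_{2k,2l} P)_{2:2m,2:2m}‖_op ≤ C·λ_{k,l}(ρ). -/

import Mathlib

open Matrix

noncomputable section

attribute [local instance] Classical.propDecidable

namespace Dipole

/-- the matrix `A = α I_m + ((1−α)/m) J` -/
def Amat (m : ℕ) (α : ℝ) : Matrix (Fin m) (Fin m) ℝ :=
  α • (1 : Matrix (Fin m) (Fin m) ℝ) + ((1 - α) / m) • Matrix.of fun _ _ => (1 : ℝ)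

/-- the matrix `B = β I_m + ((1−β)/m) J` -/
def Bmat (m : ℕ) (β : ℝ) : Matrix (Fin m) (Fin m) ℝ :=
  β • (1 : Matrix (Fin m) (Fin m) ℝ) + ((1 - β) / m) • Matrix.of fun _ _ => (1 : ℝ)

/-- the block matrix `H_odd = [[A, B], [0, 0]]` -/
def Hodd (m : ℕ) (α β : ℝ) : Matrix (Fin m ⊕ Fin m) (Fin m ⊕ Fin m) ℝ :=
  fromBlocks (Amat m α) (Bmat m β) 0 0

/-- the block matrix `H_even = [[0, 0], [B, A]]` -/
def Heven (m : ℕ) (α β : ℝ) : Matrix (Fin m ⊕ Fin m) (Fin m ⊕ Fin m) ℝ :=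
  fromBlocks 0 0 (Bmat m β) (Amat m α)

/-- the orthogonal matrix `Q = (u, w_1, …, w_{m−1})` with `u = (1/√m)(1,…,1)ᵀ` and
`w_r = (1/√(r(r+1)))(1,…,1,−r,0,…,0)ᵀ` (`r` leading ones) -/
def Qmat (m : ℕ) : Matrix (Fin m) (Fin m) ℝ :=
  Matrix.of fun i j =>
    if (j : ℕ) = 0 then (Real.sqrt m)⁻¹
    else if (i : ℕ) < (j : ℕ) then (Real.sqrt ((j : ℕ) * ((j : ℕ) + 1 : ℕ)))⁻¹
    else if (i : ℕ) = (j : ℕ) then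
      -(((j : ℕ) : ℝ)) * (Real.sqrt ((j : ℕ) * ((j : ℕ) + 1 : ℕ)))⁻¹
    else 0

/-- the orthogonal matrix `P = (1/√2) [[Q, Q], [Q, −Q]]` -/
def Pmat (m : ℕ) : Matrix (Fin m ⊕ Fin m) (Fin m ⊕ Fin m) ℝ :=
  (Real.sqrt 2)⁻¹ • fromBlocks (Qmat m) (Qmat m) (Qmat m) (-(Qmat m))

/-- `H_n = H_odd` for odd `n`, `H_even` for even `n` -/
def Hn (m : ℕ) (α β : ℝ) (n : ℕ) : Matrix (Fin m ⊕ Fin m) (Fin m ⊕ Fin m) ℝ :=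
  if Odd n then Hodd m α β else Heven m α β

/-- `Π_{k,l} = (I + H_{k+1}/k) ⋯ (I + H_{l+1}/l)` for `k ≥ l`, and `Π_{k,l} = I` for `k < l` -/
def Pimat (m : ℕ) (α β : ℝ) (l : ℕ) : ℕ → Matrix (Fin m ⊕ Fin m) (Fin m ⊕ Fin m) ℝ
  | 0 => 1
  | k + 1 =>
      if k + 1 < l then 1
      else ((1 : Matrix (Fin m ⊕ Fin m) (Fin m ⊕ Fin m) ℝ) +
        ((k : ℝ) + 1)⁻¹ • Hn m α β (k + 2)) * Pimat m α β l k

/-- `λ_{k,l}(c) = ∏_{i=l}^{k} (2i−1+2c)/(2i−1)` -/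
def lam (l k : ℕ) (c : ℝ) : ℝ :=
  ∏ i ∈ Finset.Icc l k, (2 * (i : ℝ) - 1 + 2 * c) / (2 * (i : ℝ) - 1)

/-- `ρ = max{0, γ, δ}` with `γ = (α+β)/2`, `δ = (α−β)/2` -/
def rho (α β : ℝ) : ℝ := max 0 (max ((α + β) / 2) ((α - β) / 2))

/-- the `ℓ²`-operator norm of a square real matrix -/
def opNorm {ι : Type*} [Fintype ι] [DecidableEq ι] (M : Matrix ι ι ℝ) : ℝ :=
  ‖Matrix.toEuclideanCLM (𝕜 := ℝ) M‖

/-- the submatrix obtained by deleting the first row and the first column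
(rows and columns `2` through `2m`) -/
def lowerSub (m : ℕ) [NeZero m] (M : Matrix (Fin m ⊕ Fin m) (Fin m ⊕ Fin m) ℝ) :
    Matrix {i : Fin m ⊕ Fin m // i ≠ Sum.inl 0} {i : Fin m ⊕ Fin m // i ≠ Sum.inl 0} ℝ :=
  M.submatrix Subtype.val Subtype.val

end Dipole

/-!
Conjugation by `P` diagonalizes `A` and `B` (`Q` maps `e₀` to `u`) and turns `H_odd`, `H_even`
into `D + O`, `D - O`, where `D` is diagonal, with entries `γ`, `δ` away from the two copies of
`u`, and `O` exchanges the two blocks. Every conjugated factor has its first row supported on the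
diagonal, so deleting the first row and column is multiplicative along `Π`. In a pair of
consecutive factors the first-order terms in `O` add up to `(1/(2j) - 1/(2j-1)) O`, which is of
second order, so the pair is `I + (1/(2j) + 1/(2j-1)) D + O(j⁻²)`. As `γ, δ ≥ -1`, its reduced
norm is at most `(1 + 2ρ/(2j-1)) exp(K/(2j-1)²)`: the first factors multiply to `λ_{k,l}(ρ)`, the
corrections to at most `exp(2K)` because `∑ 1/(2j-1)² ≤ 2`. For `Π_{2k,2l}` one more factor
`I + H_odd/(2l)` of bounded norm is left over.
-/

open scoped Matrix.Norms.L2Operator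

theorem one_add_smul_mul_one_add_smul {A : Type*} [Ring A] [Algebra ℝ A] (D O : A) {a b : ℝ}
    (h : b - a = a * b) :
    (1 + a • (D + O)) * (1 + b • (D - O)) =
      1 + (a + b) • D + (a * b) • ((D + O) * (D - O) - O) := by
  simp only [add_mul, mul_add, one_mul, mul_one, smul_mul_smul_comm]
  linear_combination (norm := module) -(h • O)

theorem one_add_add_le_mul_exp {a b : ℝ} (ha : 0 ≤ a) (hb : 0 ≤ b) :
    1 + a + b ≤ (1 + a) * Real.exp b := by
  nlinarith [Real.add_one_le_exp b, mul_nonneg ha hb]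

namespace Matrix

variable {ι : Type*} [Fintype ι] [DecidableEq ι]

def rowOffDiagZero (R : Type*) [CommRing R] (i₀ : ι) : Subalgebra R (Matrix ι ι R) where
  carrier := {N | ∀ j, j ≠ i₀ → N i₀ j = 0}
  mul_mem' {M N} hM hN j hj := by
    rw [mul_apply, Fintype.sum_eq_add_sum_subtype_ne _ i₀, hN j hj, mul_zero, zero_add]
    exact Finset.sum_eq_zero fun r _ => by rw [hM r r.2, zero_mul]
  add_mem' hM hN j hj := by rw [add_apply, hM j hj, hN j hj, add_zero]
  algebraMap_mem' r j hj := by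
    rw [algebraMap_eq_diagonal, diagonal_apply_ne _ (Ne.symm hj)]

variable {R : Type*} [CommRing R]

theorem diagonal_mem_rowOffDiagZero (i₀ : ι) (d : ι → R) :
    diagonal d ∈ rowOffDiagZero R i₀ := fun _ hj => diagonal_apply_ne _ (Ne.symm hj)

theorem submatrix_mul_of_mem_rowOffDiagZero {i₀ : ι} (M : Matrix ι ι R)
    {N : Matrix ι ι R} (hN : N ∈ rowOffDiagZero R i₀) :
    let e : {i // i ≠ i₀} → ι := Subtype.val
    (M * N).submatrix e e = M.submatrix e e * N.submatrix e e := by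
  ext p q
  rw [submatrix_apply, mul_apply, Fintype.sum_eq_add_sum_subtype_ne _ i₀, hN q q.2, mul_zero,
    zero_add]
  rfl

theorem transpose_mul_mul_mul_of_mul_transpose_eq_one {P : Matrix ι ι R} (hP : P * Pᵀ = 1)
    (M N : Matrix ι ι R) : Pᵀ * (M * N) * P = (Pᵀ * M * P) * (Pᵀ * N * P) := by
  simp only [Matrix.mul_assoc, ← Matrix.mul_assoc P, hP, Matrix.one_mul]

theorem l2_opNorm_one_le : ‖(1 : Matrix ι ι ℝ)‖ ≤ 1 := by
  rw [← diagonal_one, l2_opNorm_diagonal]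
  exact (pi_norm_const_le (1 : ℝ)).trans_eq norm_one

theorem l2_opNorm_one_add_smul_diagonal_le (d : ι → ℝ) {t ρ : ℝ} (ht : t ∈ Set.Icc 0 2)
    (hρ : 0 ≤ ρ) (hd : ∀ i, d i ∈ Set.Icc (-1) ρ) : ‖1 + t • diagonal d‖ ≤ 1 + t * ρ := by
  rw [← diagonal_one, ← diagonal_smul, diagonal_add, l2_opNorm_diagonal]
  refine (pi_norm_le_iff_of_nonneg (by nlinarith [ht.1])).2 fun i => abs_le.2 ⟨?_, ?_⟩ <;>
    simp only [Pi.smul_apply, smul_eq_mul] <;>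
    nlinarith [ht.1, ht.2, (hd i).1, (hd i).2]

end Matrix

namespace Dipole

open Finset

/-- `w_j` as a function on `ℕ`: column `j ≠ 0` of `Q`. -/
def wvec (j i : ℕ) : ℝ :=
  if i < j then (Real.sqrt (j * (j + 1 : ℕ)))⁻¹
  else if i = j then -(j : ℝ) * (Real.sqrt (j * (j + 1 : ℕ)))⁻¹
  else 0

theorem Qmat_apply (m : ℕ) (i j : Fin m) :
    Qmat m i j = if (j : ℕ) = 0 then (Real.sqrt m)⁻¹ else wvec j i := rfl

theorem wvec_of_lt {j i : ℕ} (h : i < j) : wvec j i = (Real.sqrt (j * (j + 1 : ℕ)))⁻¹ := by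
  rw [wvec, if_pos h]

theorem wvec_of_gt {j i : ℕ} (h : j < i) : wvec j i = 0 := by
  rw [wvec, if_neg (by omega), if_neg (by omega)]

theorem sum_range_wvec_eq {j m : ℕ} (hjm : j < m) (f : ℝ → ℝ) (hf : f 0 = 0) :
    ∑ i ∈ range m, f (wvec j i) = j * f (Real.sqrt (j * (j + 1 : ℕ)))⁻¹ +
      f (-(j : ℝ) * (Real.sqrt (j * (j + 1 : ℕ)))⁻¹) := by
  rw [← sum_subset (range_subset_range.2 (by omega : j + 1 ≤ m)), sum_range_succ,
    sum_congr rfl fun i hi => by rw [wvec_of_lt (mem_range.1 hi)], sum_const, card_range,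
    nsmul_eq_mul, wvec, if_neg (lt_irrefl j), if_pos rfl]
  intro i _ hi
  rw [wvec_of_gt (by simpa using hi), hf]

theorem sum_wvec {j m : ℕ} (hjm : j < m) : ∑ i ∈ range m, wvec j i = 0 := by
  have h := sum_range_wvec_eq hjm id rfl
  simp only [id] at h
  rw [h]
  ring

theorem sum_wvec_sq {j m : ℕ} (hj : j ≠ 0) (hjm : j < m) :
    ∑ i ∈ range m, wvec j i ^ 2 = 1 := by
  rw [sum_range_wvec_eq hjm (· ^ 2) (by simp), mul_pow, inv_pow,
    Real.sq_sqrt (by positivity)]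
  have : (j : ℝ) ≠ 0 := by exact_mod_cast hj
  push_cast
  field_simp
  ring

/-- `w_{j'}` is constant on the support of `w_j` when `j < j'`. -/
theorem wvec_mul_wvec_of_lt {j j' : ℕ} (h : j < j') (i : ℕ) :
    wvec j i * wvec j' i = wvec j i * (Real.sqrt (j' * (j' + 1 : ℕ)))⁻¹ := by
  rcases lt_or_ge j i with hi | hi
  · rw [wvec_of_gt hi, zero_mul, zero_mul]
  · rw [wvec_of_lt (by omega : i < j')]

theorem sum_wvec_mul_wvec {j j' m : ℕ} (hj : j ≠ 0) (hj' : j' < m) :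
    ∑ i ∈ range m, wvec j i * wvec j' i = if j = j' then 1 else 0 := by
  rcases lt_trichotomy j j' with h | rfl | h
  · rw [if_neg h.ne, sum_congr rfl fun i _ => wvec_mul_wvec_of_lt h i, ← sum_mul,
      sum_wvec (h.trans hj'), zero_mul]
  · simp only [← sq]
    exact sum_wvec_sq hj hj'
  · rw [if_neg h.ne', sum_congr rfl fun i _ => (mul_comm _ _).trans (wvec_mul_wvec_of_lt h i),
      ← sum_mul, sum_wvec hj', zero_mul]

theorem Qmat_transpose_mul_self (m : ℕ) : (Qmat m)ᵀ * Qmat m = 1 := by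
  ext j j'
  have hm : (m : ℝ) ≠ 0 := by have := j.pos; positivity
  simp only [mul_apply, one_apply, transpose_apply, Qmat_apply, ← Fin.val_inj]
  rw [Fin.sum_univ_eq_sum_range (fun i => (if (j : ℕ) = 0 then (Real.sqrt m)⁻¹ else wvec j i) *
    (if (j' : ℕ) = 0 then (Real.sqrt m)⁻¹ else wvec j' i))]
  by_cases hj : (j : ℕ) = 0 <;> by_cases hj' : (j' : ℕ) = 0 <;> simp only [hj, hj', if_true,
    if_false]
  · rw [sum_const, card_range, nsmul_eq_mul, ← mul_inv, Real.mul_self_sqrt (by positivity),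
      mul_inv_cancel₀ hm]
  · rw [← mul_sum, sum_wvec j'.2, mul_zero, if_neg (Ne.symm hj')]
  · rw [← sum_mul, sum_wvec j.2, zero_mul]
  · exact sum_wvec_mul_wvec hj j'.2

theorem sum_Qmat_col (m : ℕ) (j : Fin m) :
    ∑ i, Qmat m i j = if (j : ℕ) = 0 then Real.sqrt m else 0 := by
  simp only [Qmat_apply]
  rw [Fin.sum_univ_eq_sum_range (fun i => if (j : ℕ) = 0 then (Real.sqrt m)⁻¹ else wvec j i)]
  split_ifs
  · have hm : (0 : ℝ) < m := by have := j.pos; positivity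
    rw [sum_const, card_range, nsmul_eq_mul]
    field_simp
    exact (Real.sq_sqrt hm.le).symm
  · exact sum_wvec j.2

/-- The eigenvalues of `A`: `1` on `u` and `α` on its orthogonal complement. -/
def eigA (m : ℕ) (α : ℝ) (j : Fin m) : ℝ := if (j : ℕ) = 0 then 1 else α

theorem Qmat_transpose_mul_Amat_mul_Qmat (m : ℕ) (α : ℝ) :
    (Qmat m)ᵀ * Amat m α * Qmat m = diagonal (eigA m α) := by
  have hJ : ∀ j j', ((Qmat m)ᵀ * (of fun _ _ => 1 : Matrix (Fin m) (Fin m) ℝ) * Qmat m) j j' =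
      (∑ i, Qmat m i j) * ∑ i, Qmat m i j' := fun j j' => by
    simp only [mul_apply, transpose_apply, of_apply, mul_one, sum_mul, mul_sum]
  ext j j'
  have hm : (0 : ℝ) < m := by have := j.pos; positivity
  rw [Amat, Matrix.mul_add, Matrix.add_mul, Matrix.mul_smul, Matrix.smul_mul, Matrix.mul_one,
    Qmat_transpose_mul_self, Matrix.mul_smul, Matrix.smul_mul, Matrix.add_apply,
    Matrix.smul_apply, Matrix.smul_apply, hJ, sum_Qmat_col, sum_Qmat_col]
  by_cases h : j = j'
  · subst h
    by_cases h0 : (j : ℕ) = 0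
    · simp only [h0, one_apply_eq, diagonal_apply_eq, eigA, if_true, ← sq, Real.sq_sqrt hm.le]
      rw [smul_eq_mul, smul_eq_mul, div_mul_cancel₀ _ hm.ne']
      ring
    · simp [h0, eigA]
  · have h0 : ¬((j : ℕ) = 0 ∧ (j' : ℕ) = 0) := fun h0 => h (Fin.ext (h0.1.trans h0.2.symm))
    rw [one_apply_ne h, diagonal_apply_ne _ h]
    split_ifs <;> simp_all

theorem Pmat_transpose_mul_self (m : ℕ) : (Pmat m)ᵀ * Pmat m = 1 := by
  rw [Pmat, transpose_smul, fromBlocks_transpose, transpose_neg, smul_mul_smul_comm,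
    fromBlocks_multiply, ← mul_inv, Real.mul_self_sqrt zero_le_two]
  simp only [Matrix.mul_neg, Matrix.neg_mul, neg_neg, Qmat_transpose_mul_self, add_neg_cancel,
    ← two_smul ℝ (1 : Matrix (Fin m) (Fin m) ℝ), ← fromBlocks_one]
  ext (i | i) (j | j) <;> simp

theorem Pmat_mul_transpose_self (m : ℕ) : Pmat m * (Pmat m)ᵀ = 1 :=
  mul_eq_one_comm.1 (Pmat_transpose_mul_self m)

/-- `eigS m α β j = γ` and `eigD m α β j = δ` for `j ≠ 0`. -/
def eigS (m : ℕ) (α β : ℝ) (j : Fin m) : ℝ := (eigA m α j + eigA m β j) / 2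

def eigD (m : ℕ) (α β : ℝ) (j : Fin m) : ℝ := (eigA m α j - eigA m β j) / 2

def Gdiag (m : ℕ) (α β : ℝ) : Matrix (Fin m ⊕ Fin m) (Fin m ⊕ Fin m) ℝ :=
  diagonal (Sum.elim (eigS m α β) (eigD m α β))

def Goff (m : ℕ) (α β : ℝ) : Matrix (Fin m ⊕ Fin m) (Fin m ⊕ Fin m) ℝ :=
  fromBlocks 0 (diagonal (eigD m α β)) (diagonal (eigS m α β)) 0

theorem Pmat_transpose_mul_Hodd_mul_Pmat (m : ℕ) (α β : ℝ) :
    (Pmat m)ᵀ * Hodd m α β * Pmat m = Gdiag m α β + Goff m α β := by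
  simp only [Pmat, transpose_smul, fromBlocks_transpose, transpose_neg, Hodd, Matrix.smul_mul,
    Matrix.mul_smul, smul_smul, fromBlocks_multiply, Matrix.mul_zero, add_zero, Matrix.mul_neg]
  rw [← mul_inv, Real.mul_self_sqrt zero_le_two, Bmat, ← Amat]
  simp only [Qmat_transpose_mul_Amat_mul_Qmat]
  ext (i | i) (j | j) <;> simp [Gdiag, Goff, diagonal_apply, eigS, eigD] <;> split_ifs <;> ring

theorem Pmat_transpose_mul_Heven_mul_Pmat (m : ℕ) (α β : ℝ) :
    (Pmat m)ᵀ * Heven m α β * Pmat m = Gdiag m α β - Goff m α β := by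
  simp only [Pmat, transpose_smul, fromBlocks_transpose, transpose_neg, Heven, Matrix.smul_mul,
    Matrix.mul_smul, smul_smul, fromBlocks_multiply, Matrix.mul_zero, zero_add, Matrix.mul_neg,
    Matrix.neg_mul]
  rw [← mul_inv, Real.mul_self_sqrt zero_le_two, Bmat, ← Amat]
  simp only [Qmat_transpose_mul_Amat_mul_Qmat]
  ext (i | i) (j | j) <;> simp [Gdiag, Goff, diagonal_apply, eigS, eigD] <;> split_ifs <;> ring

theorem Pmat_transpose_mul_Hn_mul_Pmat (m : ℕ) (α β : ℝ) (n : ℕ) :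
    (Pmat m)ᵀ * Hn m α β n * Pmat m =
      if Odd n then Gdiag m α β + Goff m α β else Gdiag m α β - Goff m α β := by
  unfold Hn
  split_ifs
  · exact Pmat_transpose_mul_Hodd_mul_Pmat m α β
  · exact Pmat_transpose_mul_Heven_mul_Pmat m α β

theorem Gdiag_mem (m : ℕ) [NeZero m] (α β : ℝ) :
    Gdiag m α β ∈ rowOffDiagZero ℝ (Sum.inl (0 : Fin m)) :=
  diagonal_mem_rowOffDiagZero _ _

theorem Goff_mem (m : ℕ) [NeZero m] (α β : ℝ) :
    Goff m α β ∈ rowOffDiagZero ℝ (Sum.inl (0 : Fin m)) := by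
  rintro (j | j) -
  · rfl
  · simp [Goff, diagonal_apply, eigD, eigA]

theorem eigS_eigD_mem_Icc (m : ℕ) [NeZero m] {α β : ℝ} (hα : α ∈ Set.Icc (-1) 1)
    (hβ : β ∈ Set.Icc (-1) 1) {p : Fin m ⊕ Fin m} (hp : p ≠ Sum.inl 0) :
    Sum.elim (eigS m α β) (eigD m α β) p ∈ Set.Icc (-1) (rho α β) := by
  obtain ⟨hα₀, hα₁⟩ := hα
  obtain ⟨hβ₀, hβ₁⟩ := hβ
  have hγ : (α + β) / 2 ≤ rho α β := (le_max_left _ _).trans (le_max_right _ _)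
  have hδ : (α - β) / 2 ≤ rho α β := (le_max_right _ _).trans (le_max_right _ _)
  have hρ : 0 ≤ rho α β := le_max_left _ _
  rcases p with j | j
  · have hj : (j : ℕ) ≠ 0 := fun h => hp (congrArg Sum.inl (Fin.ext h))
    simp only [Sum.elim_inl, eigS, eigA, if_neg hj]
    exact ⟨by linarith, hγ⟩
  · simp only [Sum.elim_inr, eigD, eigA]
    split_ifs
    · exact ⟨by norm_num, by linarith⟩
    · exact ⟨by linarith, hδ⟩

def factor (m : ℕ) (α β : ℝ) (i : ℕ) : Matrix (Fin m ⊕ Fin m) (Fin m ⊕ Fin m) ℝ :=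
  1 + (i : ℝ)⁻¹ • Hn m α β (i + 1)

theorem Pimat_of_lt (m : ℕ) (α β : ℝ) {l n : ℕ} (h : n < l) : Pimat m α β l n = 1 := by
  cases n with
  | zero => rfl
  | succ n => rw [Pimat, if_pos h]

theorem Pimat_succ (m : ℕ) (α β : ℝ) {l n : ℕ} (h : l ≤ n + 1) :
    Pimat m α β l (n + 1) = factor m α β (n + 1) * Pimat m α β l n := by
  rw [Pimat, if_neg (by omega), factor, Nat.cast_succ]

theorem Pimat_eq_mul_factor (m : ℕ) (α β : ℝ) {l n : ℕ} (hl : 1 ≤ l) (h : l ≤ n) :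
    Pimat m α β l n = Pimat m α β (l + 1) n * factor m α β l := by
  induction n, h using Nat.le_induction with
  | base =>
    obtain ⟨k, rfl⟩ : ∃ k, l = k + 1 := ⟨l - 1, by omega⟩
    rw [Pimat_succ m α β le_rfl, Pimat_of_lt m α β (by omega : k < k + 1),
      Pimat_of_lt m α β (by omega : k + 1 < k + 1 + 1), Matrix.mul_one, Matrix.one_mul]
  | succ n h ih =>
    rw [Pimat_succ m α β (by omega), Pimat_succ m α β (by omega), ih, Matrix.mul_assoc]

theorem Pmat_transpose_mul_factor_mul_Pmat (m : ℕ) (α β : ℝ) (i : ℕ) :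
    (Pmat m)ᵀ * factor m α β i * Pmat m =
      1 + (i : ℝ)⁻¹ • ((Pmat m)ᵀ * Hn m α β (i + 1) * Pmat m) := by
  rw [factor, Matrix.mul_add, Matrix.add_mul, Matrix.mul_one, Pmat_transpose_mul_self,
    Matrix.mul_smul, Matrix.smul_mul]

/-- The second-order term of a pair of consecutive factors, conjugated by `P`. -/
def defect (m : ℕ) (α β : ℝ) : Matrix (Fin m ⊕ Fin m) (Fin m ⊕ Fin m) ℝ :=
  (Gdiag m α β + Goff m α β) * (Gdiag m α β - Goff m α β) - Goff m α β

theorem Pmat_transpose_mul_pair_mul_Pmat (m : ℕ) (α β : ℝ) {j : ℕ} (hj : 1 ≤ j) :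
    (Pmat m)ᵀ * (factor m α β (2 * j) * factor m α β (2 * j - 1)) * Pmat m =
      1 + ((2 * j : ℝ)⁻¹ + (2 * j - 1 : ℝ)⁻¹) • Gdiag m α β +
        ((2 * j : ℝ)⁻¹ * (2 * j - 1 : ℝ)⁻¹) • defect m α β := by
  have hcast : ((2 * j - 1 : ℕ) : ℝ) = 2 * j - 1 := by
    rw [Nat.cast_sub (by omega)]
    push_cast
    ring
  have hj' : (2 * j - 1 : ℝ) ≠ 0 := by
    rw [← hcast]
    exact_mod_cast (by omega : 2 * j - 1 ≠ 0)
  rw [transpose_mul_mul_mul_of_mul_transpose_eq_one (Pmat_mul_transpose_self m),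
    Pmat_transpose_mul_factor_mul_Pmat, Pmat_transpose_mul_factor_mul_Pmat,
    Pmat_transpose_mul_Hn_mul_Pmat, Pmat_transpose_mul_Hn_mul_Pmat, if_pos (by simp),
    if_neg (by rw [Nat.sub_add_cancel (by omega)]; simp), hcast, Nat.cast_mul, Nat.cast_two]
  exact one_add_smul_mul_one_add_smul _ _ (by field_simp; ring)

section Reduced

variable (m : ℕ) [NeZero m] {α β : ℝ}

def reduced (M : Matrix (Fin m ⊕ Fin m) (Fin m ⊕ Fin m) ℝ) :
    Matrix {i : Fin m ⊕ Fin m // i ≠ Sum.inl 0} {i : Fin m ⊕ Fin m // i ≠ Sum.inl 0} ℝ :=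
  lowerSub m ((Pmat m)ᵀ * M * Pmat m)

theorem opNorm_lowerSub_eq_norm_reduced (M : Matrix (Fin m ⊕ Fin m) (Fin m ⊕ Fin m) ℝ) :
    opNorm (lowerSub m ((Pmat m)ᵀ * M * Pmat m)) = ‖reduced m M‖ := rfl

theorem reduced_one : reduced m 1 = 1 := by
  rw [reduced, Matrix.mul_one, Pmat_transpose_mul_self, lowerSub,
    submatrix_one _ Subtype.val_injective]

theorem Pmat_transpose_mul_factor_mul_Pmat_mem (α β : ℝ) (i : ℕ) :
    (Pmat m)ᵀ * factor m α β i * Pmat m ∈ rowOffDiagZero ℝ (Sum.inl (0 : Fin m)) := by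
  rw [Pmat_transpose_mul_factor_mul_Pmat, Pmat_transpose_mul_Hn_mul_Pmat]
  refine add_mem (one_mem _) (Subalgebra.smul_mem _ ?_ _)
  split_ifs
  · exact add_mem (Gdiag_mem m α β) (Goff_mem m α β)
  · exact sub_mem (Gdiag_mem m α β) (Goff_mem m α β)

theorem Pmat_transpose_mul_Pimat_mul_Pmat_mem (α β : ℝ) (l n : ℕ) :
    (Pmat m)ᵀ * Pimat m α β l n * Pmat m ∈ rowOffDiagZero ℝ (Sum.inl (0 : Fin m)) := by
  induction n with
  | zero =>
    rw [Pimat, Matrix.mul_one, Pmat_transpose_mul_self]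
    exact one_mem _
  | succ n ih =>
    rcases lt_or_ge n.succ l with h | h
    · rw [Pimat_of_lt m α β h, Matrix.mul_one, Pmat_transpose_mul_self]
      exact one_mem _
    · rw [Pimat_succ m α β h,
        transpose_mul_mul_mul_of_mul_transpose_eq_one (Pmat_mul_transpose_self m)]
      exact mul_mem (Pmat_transpose_mul_factor_mul_Pmat_mem m α β _) ih

theorem reduced_mul {M N : Matrix (Fin m ⊕ Fin m) (Fin m ⊕ Fin m) ℝ}
    (hN : (Pmat m)ᵀ * N * Pmat m ∈ rowOffDiagZero ℝ (Sum.inl (0 : Fin m))) :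
    reduced m (M * N) = reduced m M * reduced m N := by
  rw [reduced, transpose_mul_mul_mul_of_mul_transpose_eq_one (Pmat_mul_transpose_self m)]
  exact submatrix_mul_of_mem_rowOffDiagZero _ hN

theorem norm_reduced_factor_le (i : ℕ) :
    ‖reduced m (factor m α β i)‖ ≤ 1 + ‖reduced m (Hn m α β (i + 1))‖ := by
  rw [reduced, Pmat_transpose_mul_factor_mul_Pmat, lowerSub]
  simp only [submatrix_add, submatrix_smul, Pi.add_apply, Pi.smul_apply,
    submatrix_one _ Subtype.val_injective]
  refine (norm_add_le _ _).trans (add_le_add l2_opNorm_one_le ?_)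
  rw [norm_smul, Real.norm_of_nonneg (by positivity)]
  exact mul_le_of_le_one_left (norm_nonneg _) (Nat.cast_inv_le_one i)

end Reduced

theorem one_le_lam_factor {ρ : ℝ} (hρ : 0 ≤ ρ) {i : ℕ} (hi : 1 ≤ i) :
    1 ≤ (2 * (i : ℝ) - 1 + 2 * ρ) / (2 * (i : ℝ) - 1) := by
  have : (1 : ℝ) ≤ i := by exact_mod_cast hi
  rw [le_div_iff₀ (by linarith)]
  linarith

theorem lam_nonneg {ρ : ℝ} (hρ : 0 ≤ ρ) {l : ℕ} (hl : 1 ≤ l) (k : ℕ) : 0 ≤ lam l k ρ :=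
  prod_nonneg fun _ hi => zero_le_one.trans (one_le_lam_factor hρ (hl.trans (mem_Icc.1 hi).1))

theorem lam_succ_le {ρ : ℝ} (hρ : 0 ≤ ρ) {l : ℕ} (hl : 1 ≤ l) (k : ℕ) :
    lam (l + 1) k ρ ≤ lam l k ρ :=
  prod_le_prod_of_subset_of_one_le (Icc_subset_Icc_left l.le_succ)
    (fun _ hi => zero_le_one.trans (one_le_lam_factor hρ (by have := (mem_Icc.1 hi).1; omega)))
    fun _ hi _ => one_le_lam_factor hρ (hl.trans (mem_Icc.1 hi).1)

def pairBound (K ρ : ℝ) (j : ℕ) : ℝ :=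
  (2 * j - 1 + 2 * ρ) / (2 * j - 1) * Real.exp (K / (2 * j - 1) ^ 2)

theorem pairBound_nonneg {K ρ : ℝ} (hρ : 0 ≤ ρ) {j : ℕ} (hj : 1 ≤ j) : 0 ≤ pairBound K ρ j :=
  mul_nonneg (zero_le_one.trans (one_le_lam_factor hρ hj)) (Real.exp_pos _).le

theorem le_pairBound {K ρ : ℝ} (hK : 0 ≤ K) (hρ : 0 ≤ ρ) {j : ℕ} (hj : 1 ≤ j) :
    1 + ((2 * j : ℝ)⁻¹ + (2 * j - 1 : ℝ)⁻¹) * ρ + (2 * j : ℝ)⁻¹ * (2 * j - 1 : ℝ)⁻¹ * K ≤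
      pairBound K ρ j := by
  have hx : (1 : ℝ) ≤ 2 * j - 1 := by
    have : (1 : ℝ) ≤ j := by exact_mod_cast hj
    linarith
  have hu : (2 * j : ℝ)⁻¹ ≤ (2 * j - 1 : ℝ)⁻¹ := inv_anti₀ (by linarith) (by linarith)
  have hu₀ : 0 ≤ (2 * j : ℝ)⁻¹ := by positivity
  have hv₀ : 0 ≤ (2 * j - 1 : ℝ)⁻¹ := by positivity
  calc _ ≤ 1 + 2 * ρ * (2 * j - 1 : ℝ)⁻¹ + K / (2 * j - 1) ^ 2 := by
        rw [div_eq_mul_inv, ← inv_pow, sq]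
        nlinarith [mul_le_mul_of_nonneg_right hu hρ, mul_le_mul_of_nonneg_right hu hv₀,
          mul_le_mul_of_nonneg_left (mul_le_mul_of_nonneg_right hu hv₀) hK]
    _ ≤ (1 + 2 * ρ * (2 * j - 1 : ℝ)⁻¹) * Real.exp (K / (2 * j - 1) ^ 2) :=
        one_add_add_le_mul_exp (by positivity) (by positivity)
    _ = pairBound K ρ j := by
        rw [pairBound]
        congr 1
        field_simp

theorem sum_inv_sq_two_mul_sub_one_le {l : ℕ} (hl : 1 ≤ l) (k : ℕ) :
    ∑ j ∈ Icc l k, ((2 * j - 1 : ℝ) ^ 2)⁻¹ ≤ 2 := by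
  calc _ ≤ ∑ j ∈ Icc l k, ((j : ℝ) ^ 2)⁻¹ := by
        refine sum_le_sum fun j hj => ?_
        have : (1 : ℝ) ≤ j := by exact_mod_cast hl.trans (mem_Icc.1 hj).1
        gcongr
        linarith
    _ ≤ ∑ j ∈ Ioo 0 (k + 1), ((j : ℝ) ^ 2)⁻¹ := by
        refine sum_le_sum_of_subset_of_nonneg (fun j hj => ?_) fun _ _ _ => by positivity
        simp only [mem_Icc, mem_Ioo] at hj ⊢
        omega
    _ ≤ 2 / ((0 : ℕ) + 1) := sum_Ioo_inv_sq_le 0 (k + 1)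
    _ = 2 := by norm_num

theorem prod_pairBound_le {K ρ : ℝ} (hK : 0 ≤ K) (hρ : 0 ≤ ρ) {l : ℕ} (hl : 1 ≤ l) (k : ℕ) :
    ∏ j ∈ Icc l k, pairBound K ρ j ≤ lam l k ρ * Real.exp (2 * K) := by
  simp only [pairBound, prod_mul_distrib, ← Real.exp_sum]
  refine mul_le_mul_of_nonneg_left (Real.exp_le_exp.2 ?_) (lam_nonneg hρ hl k)
  simp only [div_eq_mul_inv, ← mul_sum]
  nlinarith [sum_inv_sq_two_mul_sub_one_le hl k]

section Bounds

variable (m : ℕ) [NeZero m] {α β : ℝ} (hα : α ∈ Set.Icc (-1) 1) (hβ : β ∈ Set.Icc (-1) 1)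
include hα hβ

theorem norm_reduced_pair_le {j : ℕ} (hj : 1 ≤ j) :
    ‖reduced m (factor m α β (2 * j) * factor m α β (2 * j - 1))‖ ≤
      pairBound ‖lowerSub m (defect m α β)‖ (rho α β) j := by
  have hx : (1 : ℝ) ≤ 2 * j - 1 := by
    have : (1 : ℝ) ≤ j := by exact_mod_cast hj
    linarith
  have ht : (2 * j : ℝ)⁻¹ + (2 * j - 1 : ℝ)⁻¹ ∈ Set.Icc 0 2 :=
    ⟨by positivity, by linarith [inv_le_one_of_one_le₀ (by linarith : (1 : ℝ) ≤ 2 * j),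
      inv_le_one_of_one_le₀ hx]⟩
  rw [reduced, Pmat_transpose_mul_pair_mul_Pmat m α β hj, lowerSub, Gdiag]
  simp only [submatrix_add, submatrix_smul, Pi.add_apply, Pi.smul_apply,
    submatrix_one _ Subtype.val_injective, submatrix_diagonal _ _ Subtype.val_injective]
  calc _ ≤ _ := norm_add_le _ _
    _ ≤ 1 + ((2 * j : ℝ)⁻¹ + (2 * j - 1 : ℝ)⁻¹) * rho α β +
          (2 * j : ℝ)⁻¹ * (2 * j - 1 : ℝ)⁻¹ * ‖lowerSub m (defect m α β)‖ := by
        refine add_le_add (l2_opNorm_one_add_smul_diagonal_le _ ht (le_max_left _ _)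
          fun p => eigS_eigD_mem_Icc m hα hβ p.2) ?_
        rw [norm_smul, Real.norm_of_nonneg (by positivity)]
        rfl
    _ ≤ _ := le_pairBound (norm_nonneg _) (le_max_left _ _) hj

theorem norm_reduced_Pimat_le_prod {l : ℕ} (hl : 1 ≤ l) (k : ℕ) :
    ‖reduced m (Pimat m α β (2 * l - 1) (2 * k))‖ ≤
      ∏ j ∈ Icc l k, pairBound ‖lowerSub m (defect m α β)‖ (rho α β) j := by
  induction k with
  | zero =>
    rw [Icc_eq_empty (by omega), prod_empty, Nat.mul_zero, Pimat, reduced_one]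
    exact l2_opNorm_one_le
  | succ k ih =>
    rcases lt_or_ge (k + 1) l with hkl | hkl
    · rw [Icc_eq_empty (by omega), prod_empty, Pimat_of_lt m α β (by omega), reduced_one]
      exact l2_opNorm_one_le
    · have hpair : Pimat m α β (2 * l - 1) (2 * (k + 1)) =
          factor m α β (2 * (k + 1)) * factor m α β (2 * (k + 1) - 1) *
            Pimat m α β (2 * l - 1) (2 * k) := by
        rw [show 2 * (k + 1) = 2 * k + 1 + 1 by ring, Pimat_succ m α β (by omega),
          Pimat_succ m α β (by omega), Nat.add_sub_cancel, Matrix.mul_assoc]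
      rw [hpair, reduced_mul m (Pmat_transpose_mul_Pimat_mul_Pmat_mem m α β _ _),
        prod_Icc_succ_top hkl, mul_comm (∏ _ ∈ _, _)]
      exact (norm_mul_le _ _).trans (mul_le_mul (norm_reduced_pair_le m hα hβ (by omega)) ih
        (norm_nonneg _) (pairBound_nonneg (le_max_left _ _) (by omega)))

theorem norm_reduced_Pimat_odd_le {l : ℕ} (hl : 1 ≤ l) (k : ℕ) :
    ‖reduced m (Pimat m α β (2 * l - 1) (2 * k))‖ ≤
      lam l k (rho α β) * Real.exp (2 * ‖lowerSub m (defect m α β)‖) :=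
  (norm_reduced_Pimat_le_prod m hα hβ hl k).trans
    (prod_pairBound_le (norm_nonneg _) (le_max_left _ _) hl k)

theorem norm_reduced_Pimat_even_le {l k : ℕ} (hl : 1 ≤ l) (hlk : l ≤ k) :
    ‖reduced m (Pimat m α β (2 * l) (2 * k))‖ ≤
      lam (l + 1) k (rho α β) * Real.exp (2 * ‖lowerSub m (defect m α β)‖) *
        (1 + ‖reduced m (Hodd m α β)‖) := by
  rw [Pimat_eq_mul_factor m α β (by omega) (by omega),
    reduced_mul m (Pmat_transpose_mul_factor_mul_Pmat_mem m α β _),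
    show 2 * l + 1 = 2 * (l + 1) - 1 by omega]
  refine (norm_mul_le _ _).trans (mul_le_mul (norm_reduced_Pimat_odd_le m hα hβ (by omega) k)
    ?_ (norm_nonneg _) (mul_nonneg (lam_nonneg (le_max_left _ _) (by omega) k) (Real.exp_pos _).le))
  simpa [Hn] using norm_reduced_factor_le m (α := α) (β := β) (2 * l)

end Bounds

end Dipole

open Dipole in
/-- **Lemma 3.4 (operator-norm bounds for the reduced products `Π_{2k,2l−1}` and `Π_{2k,2l}`).**
There is a constant `C > 0` such that for all `k ≥ l ≥ 1`,
`‖(Pᵀ Π_{2k,2l−1} P)_{2:2m,2:2m}‖_op ≤ C λ_{k,l}(ρ)` and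
`‖(Pᵀ Π_{2k,2l} P)_{2:2m,2:2m}‖_op ≤ C λ_{k,l}(ρ)`. -/
theorem Dipole.Pimat_opNorm_bound
    (m : ℕ) (hm : 2 ≤ m) [NeZero m] (α β : ℝ)
    (hα : α ∈ Set.Icc (-(1 / ((m : ℝ) - 1))) 1)
    (hβ : β ∈ Set.Icc (-(1 / ((m : ℝ) - 1))) 1) :
    ∃ C : ℝ, 0 < C ∧ ∀ k l : ℕ, 1 ≤ l → l ≤ k →
      opNorm (lowerSub m ((Pmat m)ᵀ * Pimat m α β (2 * l - 1) (2 * k) * Pmat m)) ≤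
        C * lam l k (rho α β) ∧
      opNorm (lowerSub m ((Pmat m)ᵀ * Pimat m α β (2 * l) (2 * k) * Pmat m)) ≤
        C * lam l k (rho α β) := by
  have hm' : 1 / ((m : ℝ) - 1) ≤ 1 := by
    have : (2 : ℝ) ≤ m := by exact_mod_cast hm
    rw [div_le_one (by linarith)]
    linarith
  have hα' : α ∈ Set.Icc (-1) 1 := ⟨by linarith [hα.1], hα.2⟩
  have hβ' : β ∈ Set.Icc (-1) 1 := ⟨by linarith [hβ.1], hβ.2⟩
  have hρ : 0 ≤ rho α β := le_max_left _ _
  set E := Real.exp (2 * ‖lowerSub m (defect m α β)‖)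
  set C₁ := 1 + ‖reduced m (Hodd m α β)‖
  have hC₁ : 1 ≤ C₁ := le_add_of_nonneg_right (norm_nonneg _)
  have hE : 0 < E := Real.exp_pos _
  refine ⟨C₁ * E, by positivity, fun k l hl hlk => ⟨?_, ?_⟩⟩
  · rw [opNorm_lowerSub_eq_norm_reduced]
    calc _ ≤ lam l k (rho α β) * E := norm_reduced_Pimat_odd_le m hα' hβ' hl k
      _ ≤ _ := by nlinarith [mul_nonneg (lam_nonneg hρ hl k) hE.le]
  · rw [opNorm_lowerSub_eq_norm_reduced]
    calc _ ≤ lam (l + 1) k (rho α β) * E * C₁ := norm_reduced_Pimat_even_le m hα' hβ' hl hlk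
      _ ≤ _ := by
          nlinarith [mul_le_mul_of_nonneg_left (lam_succ_le hρ hl k) (by positivity : 0 ≤ C₁ * E)]
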